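/- arXiv:2510.09779 — 6 statements merged into one kernel-verified Lean document; each statement's English description precedes it below -/
import Mathlib

section
/- Let D ⊆ ℂ be a nonempty open connected set and f : D → ℂ a holomorphic function. If f is not identically zero and there exists a nonzero polynomial P ∈ ℂ[X,Y] such that P(z, f(z)) = 0 for all z ∈ D, then the zero set {z ∈ D : f(z) = 0} is finite. -/
/-!
Regard `P` as a polynomial in `Y` over `ℂ[X]` and split off the largest power of `Y`:
`P = Y ^ k * R` with `R(X, 0) ≠ 0`. Off the zeros of `f` the identity forces `R(z, f z) = 0`;
since `f ≢ 0`, its zeros are isolated, so by continuity `R(z, f z) = 0` on all of `D`. At a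
zero `z` of `f` this says `R(z, 0) = 0`, so the zeros of `f` are roots of the nonzero
polynomial `R(X, 0)`.
-/

open Polynomial Polynomial.Bivariate Filter Topology Set

theorem Polynomial.Bivariate.eval_equivMvPolynomial {R : Type*} [CommSemiring R] (x y : R)
    (p : R[X][Y]) : MvPolynomial.eval ![x, y] (equivMvPolynomial R p) = p.evalEval x y := by
  rw [← MvPolynomial.coe_aeval_eq_eval, ← coe_aevalAeval_eq_evalEval]
  change ((MvPolynomial.aeval ![x, y]).comp (equivMvPolynomial R).toAlgHom) p = _
  congr 1
  ext <;> simp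

theorem Polynomial.Bivariate.continuous_evalEval {R : Type*} [CommSemiring R] [TopologicalSpace R]
    [IsTopologicalSemiring R] (p : R[X][Y]) :
    Continuous fun xy : R × R => p.evalEval xy.1 xy.2 := by
  simp_rw [← eval_equivMvPolynomial]
  refine (MvPolynomial.continuous_eval _).comp (continuous_pi fun i => ?_)
  fin_cases i
  · exact continuous_fst
  · exact continuous_snd

theorem Polynomial.exists_eq_X_pow_mul_coeff_zero_ne_zero {R : Type*} [CommRing R] {p : R[X]}
    (hp : p ≠ 0) : ∃ (k : ℕ) (q : R[X]), p = X ^ k * q ∧ q.coeff 0 ≠ 0 := by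
  obtain ⟨q, hpq, hq⟩ := p.exists_eq_pow_rootMultiplicity_mul_and_not_dvd hp 0
  rw [map_zero, sub_zero] at hpq hq
  exact ⟨_, q, hpq, by rwa [X_dvd_iff] at hq⟩

theorem AnalyticOnNhd.eqOn_zero_of_eq_zero_off_zeros {𝕜 E F : Type*} [NontriviallyNormedField 𝕜]
    [NormedAddCommGroup E] [NormedSpace 𝕜 E] [TopologicalSpace F] [T2Space F] [Zero F]
    {f : 𝕜 → E} {g : 𝕜 → F} {D : Set 𝕜} (hf : AnalyticOnNhd 𝕜 f D) (hD : IsPreconnected D)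
    (hDo : IsOpen D) (hnz : ∃ z ∈ D, f z ≠ 0) (hg : ContinuousOn g D)
    (hfg : ∀ z ∈ D, f z ≠ 0 → g z = 0) : EqOn g 0 D := by
  intro z₀ hz₀
  rcases (hf z₀ hz₀).eventually_eq_zero_or_eventually_ne_zero with hf₀ | hf₀
  · obtain ⟨z, hz, hfz⟩ := hnz
    exact absurd (hf.eqOn_zero_of_preconnected_of_eventuallyEq_zero hD hz₀ hf₀ hz) hfz
  have hg₀ : g =ᶠ[𝓝[≠] z₀] 0 := by
    filter_upwards [hf₀, nhdsWithin_le_nhds (hDo.mem_nhds hz₀)] with z hfz hz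
    exact hfg z hz hfz
  exact tendsto_nhds_unique (((hg z₀ hz₀).continuousAt (hDo.mem_nhds hz₀)).tendsto.mono_left
    nhdsWithin_le_nhds) (tendsto_const_nhds.congr' hg₀.symm)

theorem stmt_1_general (D : Set ℂ) (hopen : IsOpen D) (hconn : IsConnected D)
    (f : ℂ → ℂ) (hf : DifferentiableOn ℂ f D)
    (hnz : ¬ ∀ z ∈ D, f z = 0)
    (P : MvPolynomial (Fin 2) ℂ) (hP : P ≠ 0)
    (hPf : ∀ z ∈ D, MvPolynomial.eval ![z, f z] P = 0) :
    {z ∈ D | f z = 0}.Finite := by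
  obtain ⟨Q, rfl⟩ := (equivMvPolynomial ℂ).surjective P
  obtain ⟨k, R, rfl, hR⟩ := exists_eq_X_pow_mul_coeff_zero_ne_zero (by simpa using hP)
  have hRf : EqOn (fun z => R.evalEval z (f z)) 0 D := by
    refine (hf.analyticOnNhd hopen).eqOn_zero_of_eq_zero_off_zeros hconn.isPreconnected hopen
      (by simpa using hnz) ((continuous_evalEval R).comp_continuousOn
        (continuousOn_id.prodMk hf.continuousOn)) fun z hz hfz => ?_
    have := hPf z hz
    rw [eval_equivMvPolynomial, evalEval_mul, evalEval_pow, evalEval_X] at this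
    exact (mul_eq_zero.mp this).resolve_left (pow_ne_zero k hfz)
  refine (finite_setOfPred_isRoot hR).subset fun z ⟨hz, hfz⟩ => ?_
  simpa [evalEval, hfz, coeff_zero_eq_eval_zero] using hRf hz

/-- **Finiteness of zeros of complex Nash functions.** If `D ⊆ ℂ` is a nonempty open
connected set, `f` is holomorphic on `D`, not identically zero on `D`, and there is a
nonzero polynomial `P ∈ ℂ[X,Y]` with `P (z, f z) = 0` on `D`, then the zero set of `f`
in `D` is finite. -/
theorem stmt_1 (D : Set ℂ) (hne : D.Nonempty) (hopen : IsOpen D) (hconn : IsConnected D)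
    (f : ℂ → ℂ) (hf : DifferentiableOn ℂ f D)
    (hnz : ¬ ∀ z ∈ D, f z = 0)
    (P : MvPolynomial (Fin 2) ℂ) (hP : P ≠ 0)
    (hPf : ∀ z ∈ D, MvPolynomial.eval ![z, f z] P = 0) :
    {z ∈ D | f z = 0}.Finite :=
  stmt_1_general D hopen hconn f hf hnz P hP hPf
end

section
/- Let D ⊆ ℂ be open, z₀ ∈ D, and f : D \ {z₀} → ℂ a holomorphic function satisfying P(z, f(z)) = 0 for all z ∈ D \ {z₀}, where P ∈ ℂ[X,Y] is nonzero. Then there exists an integer k ≥ 0 such that the function z ↦ (z − z₀)^k f(z) is bounded on some punctured neighborhood of z₀; in particular z₀ is a removable singularity or a pole of f, not an essential singularity. -/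
/-!
Write `P` as a polynomial `∑ aᵢ(X) Yⁱ` in `Y` over `ℂ[X]` with nonzero leading coefficient
`q = a_n`. At every `z` the value `f z` is a root of `∑ aᵢ(z) Yⁱ`, so Cauchy's bound on roots
gives `‖q z * f z‖ ≤ ∑ ‖aᵢ(z)‖`, which is bounded near `z₀`. Factoring `q = (X - z₀)ᵏ g` with
`g z₀ ≠ 0` gives `‖q z‖ ≥ c ‖z - z₀‖ᵏ` near `z₀`, hence `(z - z₀)ᵏ f z` is bounded.
-/

open Filter Finset Topology
open scoped Polynomial.Bivariate

namespace Polynomial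

theorem IsRoot.norm_leadingCoeff_mul_le_sum_norm_coeff {K : Type*} [NormedDivisionRing K]
    {p : K[X]} (hp : p ≠ 0) {a : K} (h : p.IsRoot a) :
    ‖p.leadingCoeff * a‖ ≤ ∑ i ∈ range (p.natDegree + 1), ‖p.coeff i‖ := by
  have hlc : ‖p.leadingCoeff‖₊ ≠ 0 := by simpa using hp
  have hsup : (range p.natDegree).sup (‖p.coeff ·‖₊) ≤ ∑ i ∈ range p.natDegree, ‖p.coeff i‖₊ :=
    Finset.sup_le fun i hi => single_le_sum (f := (‖p.coeff ·‖₊)) (fun _ _ => zero_le) hi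
  suffices ‖p.leadingCoeff * a‖₊ ≤ ∑ i ∈ range (p.natDegree + 1), ‖p.coeff i‖₊ by
    rw [← coe_nnnorm]; push_cast [← coe_nnnorm]; exact_mod_cast this
  calc ‖p.leadingCoeff * a‖₊ ≤ ‖p.leadingCoeff‖₊ * cauchyBound p := by
        rw [nnnorm_mul]; gcongr; exact (h.norm_lt_cauchyBound hp).le
    _ = (range p.natDegree).sup (‖p.coeff ·‖₊) + ‖p.leadingCoeff‖₊ := by
        rw [cauchyBound, mul_add, mul_div_cancel₀ _ hlc, mul_one]
    _ ≤ ∑ i ∈ range (p.natDegree + 1), ‖p.coeff i‖₊ := by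
        rw [sum_range_succ, coeff_natDegree]; gcongr

theorem Bivariate.eval_equivMvPolynomial_s3 {R : Type*} [CommSemiring R] (p : R[X][Y]) (x y : R) :
    MvPolynomial.eval ![x, y] (equivMvPolynomial R p) = p.evalEval x y := by
  have : (MvPolynomial.aeval ![x, y]).comp (equivMvPolynomial R).toAlgHom = aevalAeval x y := by
    ext <;> simp
  rw [← coe_aevalAeval_eq_evalEval, ← this]
  rfl

variable {K : Type*} [NormedField K]

theorem exists_pow_le_norm_eval_nhds {q : K[X]} (hq : q ≠ 0) (z₀ : K) :
    ∃ m : ℕ, ∃ c > 0, ∀ᶠ z in 𝓝 z₀, c * ‖z - z₀‖ ^ m ≤ ‖q.eval z‖ := by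
  set m := q.rootMultiplicity z₀
  set g := q /ₘ (X - C z₀) ^ m
  have hg : ‖g.eval z₀‖ / 2 < ‖g.eval z₀‖ := by
    have := norm_pos_iff.mpr (eval_divByMonic_pow_rootMultiplicity_ne_zero z₀ hq)
    linarith
  have hfac : (X - C z₀) ^ m * g = q := pow_mul_divByMonic_rootMultiplicity_eq q z₀
  have hq_eq : ∀ z, q.eval z = (z - z₀) ^ m * g.eval z := fun z => by
    rw [← hfac, eval_mul, eval_pow, eval_sub, eval_X, eval_C]
  refine ⟨m, ‖g.eval z₀‖ / 2, by linarith [norm_nonneg (g.eval z₀)], ?_⟩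
  filter_upwards [(g.continuous.norm.tendsto z₀).eventually_const_lt hg] with z hz
  rw [hq_eq, norm_mul, norm_pow, mul_comm]
  gcongr

theorem exists_bounded_pow_mul_of_evalEval_eq_zero {Q : K[X][Y]} (hQ : Q ≠ 0) {z₀ : K}
    {f : K → K} (hf : ∀ᶠ z in 𝓝[≠] z₀, Q.evalEval z (f z) = 0) :
    ∃ k : ℕ, ∃ C : ℝ, ∀ᶠ z in 𝓝[≠] z₀, ‖(z - z₀) ^ k * f z‖ ≤ C := by
  obtain ⟨m, c, hc, hlow⟩ := exists_pow_le_norm_eval_nhds (leadingCoeff_ne_zero.mpr hQ) z₀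
  set S : K → ℝ := fun z => ∑ i ∈ range (Q.natDegree + 1), ‖(Q.coeff i).eval z‖
  have hS : Continuous S := by fun_prop
  refine ⟨m, (S z₀ + 1) / c, ?_⟩
  filter_upwards [hf, nhdsWithin_le_nhds hlow,
    nhdsWithin_le_nhds ((hS.tendsto z₀).eventually_lt_const (lt_add_one (S z₀))),
    self_mem_nhdsWithin] with z hroot hz hSz (hne : z ≠ z₀)
  have hlc : Q.leadingCoeff.eval z ≠ 0 := by
    have : 0 < ‖z - z₀‖ := norm_pos_iff.mpr (sub_ne_zero.mpr hne)
    exact norm_pos_iff.mp (lt_of_lt_of_le (by positivity) hz)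
  set p := Q.map (evalRingHom z)
  have hp_lc : p.leadingCoeff = Q.leadingCoeff.eval z :=
    leadingCoeff_map_of_leadingCoeff_ne_zero _ hlc
  have hp_deg : p.natDegree = Q.natDegree := natDegree_map_of_leadingCoeff_ne_zero _ hlc
  have hbound : ‖Q.leadingCoeff.eval z * f z‖ ≤ S z := by
    have hp : p ≠ 0 := by rw [← leadingCoeff_ne_zero, hp_lc]; exact hlc
    have hroot' : p.IsRoot (f z) := by rw [IsRoot, map_evalRingHom_eval]; exact hroot
    simpa only [hp_lc, hp_deg, p, coeff_map, coe_evalRingHom] using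
      hroot'.norm_leadingCoeff_mul_le_sum_norm_coeff hp
  rw [le_div_iff₀ hc]
  calc ‖(z - z₀) ^ m * f z‖ * c = c * ‖z - z₀‖ ^ m * ‖f z‖ := by
        rw [norm_mul, norm_pow]; ring
    _ ≤ ‖Q.leadingCoeff.eval z‖ * ‖f z‖ := by gcongr
    _ ≤ S z₀ + 1 := by rw [← norm_mul]; linarith

end Polynomial

theorem stmt_3_general (D : Set ℂ) (hopen : IsOpen D) (z₀ : ℂ) (hz₀ : z₀ ∈ D)
    (f : ℂ → ℂ)
    (P : MvPolynomial (Fin 2) ℂ) (hP : P ≠ 0)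
    (hPf : ∀ z ∈ D \ {z₀}, MvPolynomial.eval ![z, f z] P = 0) :
    ∃ k : ℕ, ∃ U ∈ nhds z₀, ∃ C : ℝ,
      ∀ z ∈ U, z ≠ z₀ → ‖(z - z₀) ^ k * f z‖ ≤ C := by
  set Q := (Polynomial.Bivariate.equivMvPolynomial ℂ).symm P
  have hQ : Q ≠ 0 := by simpa [Q] using hP
  have hroot : ∀ᶠ z in 𝓝[≠] z₀, Q.evalEval z (f z) = 0 := by
    filter_upwards [sdiff_mem_nhdsWithin_compl (hopen.mem_nhds hz₀) {z₀}] with z hz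
    rw [← Polynomial.Bivariate.eval_equivMvPolynomial_s3, AlgEquiv.apply_symm_apply]
    exact hPf z hz
  obtain ⟨k, C, hbound⟩ := Polynomial.exists_bounded_pow_mul_of_evalEval_eq_zero hQ hroot
  obtain ⟨U, hU, hUC⟩ := (eventually_nhdsWithin_iff.mp hbound).exists_mem
  exact ⟨k, U, hU, C, hUC⟩

/-- **Singularities of complex Nash functions.** If `f` is holomorphic on `D \ {z₀}` and
satisfies a nonzero polynomial identity `P(z, f z) = 0` there, then for some `k ≥ 0` the
function `z ↦ (z - z₀)^k * f z` is bounded on a punctured neighbourhood of `z₀`; hence `z₀`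
is a removable singularity or a pole, not an essential singularity. -/
theorem stmt_3 (D : Set ℂ) (hopen : IsOpen D) (z₀ : ℂ) (hz₀ : z₀ ∈ D)
    (f : ℂ → ℂ) (hf : DifferentiableOn ℂ f (D \ {z₀}))
    (P : MvPolynomial (Fin 2) ℂ) (hP : P ≠ 0)
    (hPf : ∀ z ∈ D \ {z₀}, MvPolynomial.eval ![z, f z] P = 0) :
    ∃ k : ℕ, ∃ U ∈ nhds z₀, ∃ C : ℝ,
      ∀ z ∈ U, z ≠ z₀ → ‖(z - z₀) ^ k * f z‖ ≤ C :=
  stmt_3_general D hopen z₀ hz₀ f P hP hPf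
end

section
/- Let D₀ ⊆ ℂ be a closed discrete subset and f : ℂ \ D₀ → ℂ a holomorphic function such that there exists a nonzero polynomial R ∈ ℂ[X,Y] with R(z, f(z)) = 0 for all z ∈ ℂ \ D₀. Then there exist polynomials P, Q ∈ ℂ[X] with Q not identically zero such that f(z) = P(z)/Q(z) for all z ∈ ℂ \ D₀. -/
open Polynomial Filter Topology

noncomputable def toYX (R : MvPolynomial (Fin 2) ℂ) : Polynomial (Polynomial ℂ) :=
  MvPolynomial.aeval ![(Polynomial.C Polynomial.X : Polynomial (Polynomial ℂ)), Polynomial.X] R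

lemma toYX_eval (R : MvPolynomial (Fin 2) ℂ) (z w : ℂ) :
    Polynomial.eval w ((toYX R).map (Polynomial.evalRingHom z)) = MvPolynomial.eval ![z, w] R := by
  induction R using MvPolynomial.induction_on with
  | C a => simp [toYX]
  | add p q hp hq =>
      rw [toYX] at hp hq ⊢
      simp [Polynomial.map_add, hp, hq]
  | mul_X p i hp =>
      rw [toYX, map_mul]
      rw [toYX] at hp
      fin_cases i <;>
        simp [Polynomial.map_mul, hp]


lemma entire_poly : ∀ (m : ℕ) (G : ℂ → ℂ) (C : ℝ), Differentiable ℂ G →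
    (∀ z : ℂ, 1 ≤ ‖z‖ → ‖G z‖ ≤ C * ‖z‖ ^ m) → ∃ p : Polynomial ℂ, ∀ z, G z = p.eval z := by
  intro m
  induction m with
  | zero =>
      intro G C hG hb
      obtain ⟨B, hB⟩ := (isCompact_closedBall (0:ℂ) 1).exists_bound_of_continuousOn
        hG.continuous.continuousOn
      have hbdd : ∀ z, ‖G z‖ ≤ max C B := by
        intro z
        rcases le_or_gt 1 ‖z‖ with h | h
        · exact le_trans (by simpa using hb z h) (le_max_left _ _)
        · exact le_trans (hB z (by simpa [Metric.mem_closedBall, Complex.dist_eq] using h.le))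
            (le_max_right _ _)
      have hbR : Bornology.IsBounded (Set.range G) :=
        isBounded_iff_forall_norm_le.2 ⟨max C B, by rintro y ⟨z, rfl⟩; exact hbdd z⟩
      have : ∀ z, G z = G 0 := fun z => hG.apply_eq_apply_of_bounded hbR z 0
      exact ⟨Polynomial.C (G 0), fun z => by simp [this z]⟩
  | succ m ih =>
      intro G C hG hb
      set d := deriv G 0 with hd
      set H0 : ℂ → ℂ := fun z => (G z - G 0) / z with hH0
      have hslope : Filter.Tendsto H0 (𝓝[≠] (0:ℂ)) (𝓝 d) := by
        have h1 := (hG 0).hasDerivAt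
        rw [hasDerivAt_iff_tendsto_slope] at h1
        apply h1.congr'
        filter_upwards [self_mem_nhdsWithin] with z hz
        simp [slope_def_field, H0, div_eq_inv_mul, sub_zero]
      -- bound near 0
      have hev : ∀ᶠ z in 𝓝[≠] (0:ℂ), ‖H0 z‖ ≤ ‖d‖ + 1 := by
        have := hslope.norm.eventually_le_const (lt_add_one ‖d‖)
        exact this
      obtain ⟨U, hUo, hU0, hUs⟩ := mem_nhdsWithin.mp hev
      obtain ⟨r, hr, hball⟩ := Metric.isOpen_iff.mp hUo 0 hU0
      set s := Metric.ball (0:ℂ) r with hs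
      have hsnhds : s ∈ 𝓝 (0:ℂ) := Metric.ball_mem_nhds _ hr
      have hd0 : DifferentiableOn ℂ H0 (s \ {0}) := by
        apply DifferentiableOn.div
        · exact (hG.sub_const _).differentiableOn
        · exact differentiableOn_id
        · intro z hz; exact hz.2
      have hbdd : BddAbove (norm ∘ H0 '' (s \ {0})) := by
        refine ⟨‖d‖ + 1, ?_⟩
        rintro x ⟨z, hz, rfl⟩
        exact hUs ⟨hball hz.1, hz.2⟩
      set H := Function.update H0 0 (limUnder (𝓝[≠] (0:ℂ)) H0) with hH
      have hHs : DifferentiableOn ℂ H s :=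
        Complex.differentiableOn_update_limUnder_of_bddAbove hsnhds hd0 hbdd
      have hHdiff : Differentiable ℂ H := by
        intro z
        rcases eq_or_ne z 0 with rfl | hz
        · exact hHs.differentiableAt hsnhds
        · have heq : H =ᶠ[𝓝 z] H0 := by
            filter_upwards [isOpen_ne.mem_nhds hz] with w hw
            simp [H, Function.update_of_ne hw]
          refine (DifferentiableAt.congr_of_eventuallyEq ?_ heq)
          exact DifferentiableAt.div ((hG z).sub_const _) differentiableAt_id hz
      have hHb : ∀ z : ℂ, 1 ≤ ‖z‖ → ‖H z‖ ≤ (C + ‖G 0‖) * ‖z‖ ^ m := by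
        intro z hz
        have hzne : z ≠ 0 := by intro h; rw [h] at hz; simp at hz; linarith
        have hz0 : (0:ℝ) < ‖z‖ := lt_of_lt_of_le one_pos hz
        have : H z = H0 z := Function.update_of_ne hzne _ _
        rw [this]
        have h1 : ‖H0 z‖ = ‖G z - G 0‖ / ‖z‖ := by simp [H0]
        rw [h1]
        have h2 : ‖G z - G 0‖ ≤ C * ‖z‖ ^ (m+1) + ‖G 0‖ :=
          le_trans (norm_sub_le _ _) (add_le_add_left (hb z hz) _)
        have h3 : ‖G z - G 0‖ / ‖z‖ ≤ (C * ‖z‖ ^ (m+1) + ‖G 0‖) / ‖z‖ :=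
          div_le_div_of_nonneg_right h2 hz0.le
        refine h3.trans ?_
        rw [add_div]
        have e1 : C * ‖z‖ ^ (m+1) / ‖z‖ = C * ‖z‖ ^ m := by
          rw [mul_div_assoc, pow_succ, mul_div_assoc, div_self hz0.ne', mul_one]
        rw [e1]
        have e2 : ‖G 0‖ / ‖z‖ ≤ ‖G 0‖ * ‖z‖ ^ m :=
          (div_le_self (norm_nonneg _) hz).trans
            (le_mul_of_one_le_right (norm_nonneg _) (one_le_pow₀ hz))
        rw [add_mul]
        exact add_le_add_right e2 _
      obtain ⟨q, hq⟩ := ih H (C + ‖G 0‖) hHdiff hHb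
      refine ⟨Polynomial.X * q + Polynomial.C (G 0), fun z => ?_⟩
      rcases eq_or_ne z 0 with rfl | hz
      · simp
      · have hHz : H0 z = eval z q := by
          rw [← hq z]; exact (Function.update_of_ne hz _ _).symm
        simp only [eval_add, eval_mul, eval_X, eval_C, ← hHz]
        simp only [H0]
        rw [mul_div_assoc', mul_div_cancel_left₀ _ hz]
        ring


lemma poly_growth (p : Polynomial ℂ) (z : ℂ) :
    ‖p.eval z‖ ≤ (∑ i ∈ Finset.range (p.natDegree + 1), ‖p.coeff i‖) * (1 + ‖z‖) ^ p.natDegree := by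
  rw [Polynomial.eval_eq_sum_range]
  refine (norm_sum_le _ _).trans ?_
  rw [Finset.sum_mul]
  refine Finset.sum_le_sum fun i hi => ?_
  rw [norm_mul, norm_pow]
  have h1 : (1:ℝ) ≤ 1 + ‖z‖ := by linarith [norm_nonneg z]
  have h2 : ‖z‖ ^ i ≤ (1 + ‖z‖) ^ p.natDegree := by
    calc ‖z‖ ^ i ≤ (1 + ‖z‖) ^ i := pow_le_pow_left₀ (norm_nonneg _) (by linarith) i
    _ ≤ (1 + ‖z‖) ^ p.natDegree :=
        pow_le_pow_right₀ h1 (Nat.lt_succ_iff.mp (Finset.mem_range.mp hi))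
  exact mul_le_mul_of_nonneg_left h2 (norm_nonneg _)

/-- **Global meromorphic complex Nash functions are rational.** If `D₀ ⊆ ℂ` is closed and
discrete and `f` is holomorphic on `ℂ \ D₀` satisfying a nonzero polynomial identity
`R(z, f z) = 0` there, then `f = P/Q` on `ℂ \ D₀` for some polynomials `P, Q` with `Q ≠ 0`. -/
theorem stmt_4 (D₀ : Set ℂ) (hclosed : IsClosed D₀) (hdisc : DiscreteTopology D₀)
    (f : ℂ → ℂ) (hf : DifferentiableOn ℂ f D₀ᶜ)
    (R : MvPolynomial (Fin 2) ℂ) (hR : R ≠ 0)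
    (hRf : ∀ z ∉ D₀, MvPolynomial.eval ![z, f z] R = 0) :
    ∃ P Q : Polynomial ℂ, Q ≠ 0 ∧ ∀ z ∉ D₀, f z = P.eval z / Q.eval z := by
  classical
  set S := toYX R with hSdef
  have hS0 : S ≠ 0 := by
    intro h
    apply hR
    apply MvPolynomial.funext
    intro x
    have hx : x = ![x 0, x 1] := by
      funext i; fin_cases i <;> rfl
    rw [hx, ← toYX_eval R (x 0) (x 1), ← hSdef, h]
    simp
  have ha0 : S.leadingCoeff ≠ 0 := mt Polynomial.leadingCoeff_eq_zero.mp hS0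
  set a := S.leadingCoeff with ha
  -- isolatedness and density
  have hdisc' := discreteTopology_subtype_iff.mp hdisc
  have hiso : ∀ w ∈ D₀, ∀ᶠ z in 𝓝[≠] w, z ∉ D₀ := fun w hw =>
    Filter.inf_principal_eq_bot.mp (hdisc' w hw)
  have hopen : IsOpen D₀ᶜ := hclosed.isOpen_compl
  have hdense : Dense D₀ᶜ := by
    intro w
    by_cases hw : w ∈ D₀
    · rw [mem_closure_iff_frequently]
      exact ((hiso w hw).frequently).filter_mono nhdsWithin_le_nhds
    · exact subset_closure hw
  -- the evaluation sum identity
  have hsum : ∀ N, S.natDegree < N → ∀ z ∉ D₀,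
      ∑ i ∈ Finset.range N, (S.coeff i).eval z * f z ^ i = 0 := by
    intro N hN z hz
    have h1 := toYX_eval R z (f z)
    rw [hRf z hz, ← hSdef] at h1
    have h2 : (S.map (Polynomial.evalRingHom z)).natDegree < N :=
      lt_of_le_of_lt Polynomial.natDegree_map_le hN
    have h3 := Polynomial.eval_eq_sum_range' h2 (f z)
    rw [h1] at h3
    have h4 : ∑ i ∈ Finset.range N, (S.coeff i).eval z * f z ^ i
        = ∑ i ∈ Finset.range N, (Polynomial.map (Polynomial.evalRingHom z) S).coeff i * f z ^ i :=
      Finset.sum_congr rfl fun i _ => by rw [Polynomial.coeff_map, Polynomial.coe_evalRingHom]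
    rw [h4, ← h3]
  -- natDegree ≥ 1
  obtain ⟨k, hk⟩ : ∃ k, S.natDegree = k + 1 := by
    refine ⟨S.natDegree - 1, ?_⟩
    rcases Nat.eq_zero_or_pos S.natDegree with h | h
    · exfalso
      have hc : S.coeff 0 ≠ 0 := by rwa [ha, Polynomial.leadingCoeff, h] at ha0
      have hval : ∀ z ∉ D₀, (S.coeff 0).eval z = 0 := by
        intro z hz
        have := hsum 1 (by omega) z hz
        simpa using this
      have hsub : D₀ᶜ ⊆ ((S.coeff 0).roots.toFinset : Set ℂ) := by
        intro z hz
        have : z ∈ (S.coeff 0).roots := Polynomial.mem_roots'.mpr ⟨hc, hval z hz⟩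
        simpa using this
      have hcl : closure D₀ᶜ ⊆ ((S.coeff 0).roots.toFinset : Set ℂ) :=
        ((S.coeff 0).roots.toFinset : Set ℂ).toFinite.isClosed.closure_subset_iff.mpr hsub
      rw [hdense.closure_eq] at hcl
      exact Set.infinite_univ (((S.coeff 0).roots.toFinset : Set ℂ).toFinite.subset hcl)
    · omega
  -- the auxiliary polynomials and g
  set b : ℕ → Polynomial ℂ := fun i => S.coeff i * a ^ (k - i) with hb
  set g : ℂ → ℂ := fun z => a.eval z * f z with hg
  have key : ∀ z, a.eval z ^ k * ∑ i ∈ Finset.range (k+2), (S.coeff i).eval z * f z ^ i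
      = g z ^ (k+1) + ∑ i ∈ Finset.range (k+1), (b i).eval z * g z ^ i := by
    intro z
    rw [Finset.sum_range_succ, mul_add, Finset.mul_sum]
    have e1 : ∀ i ∈ Finset.range (k+1),
        a.eval z ^ k * ((S.coeff i).eval z * f z ^ i) = (b i).eval z * g z ^ i := by
      intro i hi
      have hik : i ≤ k := Nat.lt_succ_iff.mp (Finset.mem_range.mp hi)
      have hpow : a.eval z ^ k = a.eval z ^ (k-i) * a.eval z ^ i := by
        rw [← pow_add, Nat.sub_add_cancel hik]
      rw [hpow]
      simp only [hb, hg, Polynomial.eval_mul, Polynomial.eval_pow, mul_pow]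
      ring
    have e2 : (S.coeff (k+1)).eval z = a.eval z := by
      rw [← hk, Polynomial.coeff_natDegree, ← ha]
    rw [Finset.sum_congr rfl e1, e2]
    rw [add_comm]
    congr 1
    simp only [hg, mul_pow, pow_succ]
    ring
  have hgrel : ∀ z ∉ D₀,
      g z ^ (k+1) + ∑ i ∈ Finset.range (k+1), (b i).eval z * g z ^ i = 0 := by
    intro z hz
    rw [← key z, hsum (k+2) (by omega) z hz, mul_zero]
  -- bound for g
  have hbound : ∀ z ∉ D₀, ‖g z‖ ≤ max 1 (∑ i ∈ Finset.range (k+1), ‖(b i).eval z‖) := by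
    intro z hz
    rcases le_or_gt ‖g z‖ 1 with h | h
    · exact h.trans (le_max_left _ _)
    · have hx0 : (0:ℝ) < ‖g z‖ := lt_trans one_pos h
      have h2 : ‖g z‖ ^ (k+1) = ‖∑ i ∈ Finset.range (k+1), (b i).eval z * g z ^ i‖ := by
        rw [← norm_pow]
        have := eq_neg_of_add_eq_zero_left (hgrel z hz)
        rw [this, norm_neg]
      have h3 : ‖∑ i ∈ Finset.range (k+1), (b i).eval z * g z ^ i‖
          ≤ (∑ i ∈ Finset.range (k+1), ‖(b i).eval z‖) * ‖g z‖ ^ k := by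
        refine (norm_sum_le _ _).trans ?_
        rw [Finset.sum_mul]
        refine Finset.sum_le_sum fun i hi => ?_
        rw [norm_mul, norm_pow]
        exact mul_le_mul_of_nonneg_left
          (pow_le_pow_right₀ h.le (Nat.lt_succ_iff.mp (Finset.mem_range.mp hi)))
          (norm_nonneg _)
      have h4 : ‖g z‖ * ‖g z‖ ^ k ≤ (∑ i ∈ Finset.range (k+1), ‖(b i).eval z‖) * ‖g z‖ ^ k := by
        rw [← pow_succ']
        rw [← h2] at h3
        exact h3
      have h5 := le_of_mul_le_mul_right h4 (pow_pos hx0 k)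
      exact h5.trans (le_max_right _ _)
  -- the entire extension G
  set G : ℂ → ℂ := fun z => if z ∈ D₀ then limUnder (𝓝[≠] z) g else g z with hGdef
  have hGg : ∀ z ∉ D₀, G z = g z := fun z hz => if_neg hz
  have hgdiff : DifferentiableOn ℂ g D₀ᶜ :=
    (a.differentiable.differentiableOn).mul hf
  have hGdiff : Differentiable ℂ G := by
    intro z
    by_cases hz : z ∈ D₀
    · obtain ⟨U, hUo, hU0, hUs⟩ := mem_nhdsWithin.mp (hiso z hz)
      obtain ⟨r, hr, hball⟩ := Metric.isOpen_iff.mp hUo z hU0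
      have hBsub : Metric.ball z r \ {z} ⊆ D₀ᶜ := fun w hw => hUs ⟨hball hw.1, hw.2⟩
      have hgB : DifferentiableOn ℂ g (Metric.ball z r \ {z}) := hgdiff.mono hBsub
      have hMc : Continuous fun w : ℂ => max 1 (∑ i ∈ Finset.range (k+1), ‖(b i).eval w‖) := by
        apply Continuous.max continuous_const
        exact continuous_finset_sum _ fun i _ => ((b i).continuous).norm
      obtain ⟨Bd, hBd⟩ := (isCompact_closedBall z r).exists_bound_of_continuousOn hMc.continuousOn
      have hbddB : BddAbove (norm ∘ g '' (Metric.ball z r \ {z})) := by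
        refine ⟨Bd, ?_⟩
        rintro x ⟨w, hw, rfl⟩
        refine le_trans (hbound w (hBsub hw)) ?_
        refine le_trans (le_abs_self _) ?_
        exact hBd w (Metric.ball_subset_closedBall hw.1)
      have hupd := Complex.differentiableOn_update_limUnder_of_bddAbove
        (Metric.ball_mem_nhds z hr) hgB hbddB
      have hagree : Set.EqOn G (Function.update g z (limUnder (𝓝[≠] z) g)) (Metric.ball z r) := by
        intro w hw
        rcases eq_or_ne w z with rfl | hwz
        · simp [hGdef, hz]
        · have hwD : w ∉ D₀ := hBsub ⟨hw, hwz⟩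
          simp [hGdef, hwD, Function.update_of_ne hwz]
      exact (hupd.congr hagree).differentiableAt
        (Metric.isOpen_ball.mem_nhds (Metric.mem_ball_self hr))
    · have heq : G =ᶠ[𝓝 z] g := by
        filter_upwards [hopen.mem_nhds hz] with w hw
        exact hGg w hw
      exact (hgdiff.differentiableAt (hopen.mem_nhds hz)).congr_of_eventuallyEq heq
  -- growth bound for G
  set Cb : ℝ := ∑ i ∈ Finset.range (k+1),
    (∑ j ∈ Finset.range ((b i).natDegree + 1), ‖(b i).coeff j‖) with hCb
  set m : ℕ := (Finset.range (k+1)).sup fun i => (b i).natDegree with hm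
  have hCb0 : 0 ≤ Cb := Finset.sum_nonneg fun i _ => Finset.sum_nonneg fun j _ => norm_nonneg _
  have hgrow : ∀ z ∉ D₀, ‖G z‖ ≤ (1 + Cb) * (1 + ‖z‖) ^ m := by
    intro z hz
    rw [hGg z hz]
    have h1 : (1:ℝ) ≤ 1 + ‖z‖ := by linarith [norm_nonneg z]
    have h2 : ∑ i ∈ Finset.range (k+1), ‖(b i).eval z‖ ≤ Cb * (1 + ‖z‖) ^ m := by
      rw [hCb, Finset.sum_mul]
      refine Finset.sum_le_sum fun i hi => ?_
      refine (poly_growth (b i) z).trans ?_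
      refine mul_le_mul_of_nonneg_left ?_ (Finset.sum_nonneg fun j _ => norm_nonneg _)
      exact pow_le_pow_right₀ h1 (by rw [hm]; exact Finset.le_sup (f := fun i => (b i).natDegree) hi)
    refine (hbound z hz).trans ?_
    have h3 : (1:ℝ) ≤ (1 + ‖z‖) ^ m := one_le_pow₀ h1
    refine max_le ?_ ?_
    · nlinarith
    · nlinarith
  have hGall : ∀ z, ‖G z‖ ≤ (1 + Cb) * (1 + ‖z‖) ^ m := by
    have hK : IsClosed {z : ℂ | ‖G z‖ ≤ (1 + Cb) * (1 + ‖z‖) ^ m} := by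
      apply isClosed_le
      · exact hGdiff.continuous.norm
      · exact (continuous_const.mul ((continuous_const.add continuous_norm).pow m))
    intro z
    exact hK.closure_subset_iff.mpr (fun w hw => hgrow w hw) (hdense z)
  -- G is a polynomial
  obtain ⟨P₀, hP₀⟩ : ∃ p : Polynomial ℂ, ∀ z, G z = p.eval z := by
    apply entire_poly m G ((1 + Cb) * 2 ^ m) hGdiff
    intro z hz1
    refine (hGall z).trans ?_
    have h1 : (1 + ‖z‖) ≤ 2 * ‖z‖ := by linarith
    have h2 : (1 + ‖z‖) ^ m ≤ (2 * ‖z‖) ^ m :=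
      pow_le_pow_left₀ (by linarith [norm_nonneg z]) h1 m
    calc (1 + Cb) * (1 + ‖z‖) ^ m ≤ (1 + Cb) * (2 * ‖z‖) ^ m :=
          mul_le_mul_of_nonneg_left h2 (by linarith)
      _ = (1 + Cb) * 2 ^ m * ‖z‖ ^ m := by rw [mul_pow]; ring
  have haf : ∀ z ∉ D₀, a.eval z * f z = P₀.eval z := by
    intro z hz
    rw [← hP₀ z, hGg z hz]
  -- reduce the fraction P₀ / a
  set dd := GCDMonoid.gcd P₀ a with hdd
  have hdd0 : dd ≠ 0 := gcd_ne_zero_of_right ha0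
  set P₁ := P₀ / dd with hP₁
  set Q₁ := a / dd with hQ₁
  have hQmul : dd * Q₁ = a := EuclideanDomain.mul_div_cancel' hdd0 (gcd_dvd_right _ _)
  have hPmul : dd * P₁ = P₀ := EuclideanDomain.mul_div_cancel' hdd0 (gcd_dvd_left _ _)
  have hQ10 : Q₁ ≠ 0 := right_div_gcd_ne_zero ha0
  have hcop : IsCoprime P₁ Q₁ := isCoprime_div_gcd_div_gcd ha0
  -- the key pointwise identity
  have hE1 : ∀ z ∉ D₀, dd.eval z ≠ 0 → Q₁.eval z * f z = P₁.eval z := by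
    intro z hz hdz
    have h1 := haf z hz
    rw [← hQmul, ← hPmul] at h1
    simp only [Polynomial.eval_mul] at h1
    apply mul_left_cancel₀ hdz
    rw [← mul_assoc]
    exact h1
  have hE : ∀ z ∉ D₀, Q₁.eval z * f z = P₁.eval z := by
    intro z hz
    by_cases hdz : dd.eval z ≠ 0
    · exact hE1 z hz hdz
    · push_neg at hdz
      set φ : ℂ → ℂ := fun w => Q₁.eval w * f w - P₁.eval w with hφ
      have hfc : ContinuousAt f z := (hf.differentiableAt (hopen.mem_nhds hz)).continuousAt
      have hcont : ContinuousAt φ z := by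
        apply ContinuousAt.sub
        · exact (Q₁.continuous.continuousAt).mul hfc
        · exact P₁.continuous.continuousAt
      have h1 : ∀ᶠ w in 𝓝[≠] z, w ∉ D₀ :=
        nhdsWithin_le_nhds (hopen.mem_nhds hz)
      have h2 : ∀ᶠ w in 𝓝[≠] z, dd.eval w ≠ 0 := by
        have hTfin : (↑dd.roots.toFinset \ {z} : Set ℂ).Finite :=
          (dd.roots.toFinset : Set ℂ).toFinite.subset Set.diff_subset
        have hTo : IsOpen (↑dd.roots.toFinset \ {z} : Set ℂ)ᶜ := hTfin.isClosed.isOpen_compl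
        have hzT : z ∈ (↑dd.roots.toFinset \ {z} : Set ℂ)ᶜ := by simp
        filter_upwards [nhdsWithin_le_nhds (hTo.mem_nhds hzT), self_mem_nhdsWithin] with w hw hwz
        intro hcon
        apply hw
        exact ⟨by simpa using Polynomial.mem_roots'.mpr ⟨hdd0, hcon⟩, hwz⟩
      have hev0 : ∀ᶠ w in 𝓝[≠] z, φ w = 0 := by
        filter_upwards [h1, h2] with w hw1 hw2
        rw [hφ]
        simp only
        rw [hE1 w hw1 hw2, sub_self]
      have hlim1 : Tendsto φ (𝓝[≠] z) (𝓝 (φ z)) :=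
        (hcont.tendsto).mono_left nhdsWithin_le_nhds
      have hlim2 : Tendsto φ (𝓝[≠] z) (𝓝 0) := by
        rw [Filter.tendsto_congr' hev0]
        exact tendsto_const_nhds
      have hzero : φ z = 0 := tendsto_nhds_unique hlim1 hlim2
      exact sub_eq_zero.mp hzero
  refine ⟨P₁, Q₁, hQ10, ?_⟩
  intro z hz
  by_cases hq : Q₁.eval z = 0
  · exfalso
    obtain ⟨u, v, huv⟩ := hcop
    have := congrArg (Polynomial.eval z) huv
    simp only [Polynomial.eval_add, Polynomial.eval_mul, Polynomial.eval_one] at this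
    have hP1z : P₁.eval z = 0 := by
      have := hE z hz
      rw [hq, zero_mul] at this
      exact this.symm
    rw [hP1z, hq] at this
    simp at this
  · rw [eq_div_iff hq, mul_comm]
    exact hE z hz
end

section
/- If f : ℂ → ℂ is holomorphic and there exists a nonzero polynomial P ∈ ℂ[X,Y] with P(z, f(z)) = 0 for all z ∈ ℂ, then f is a polynomial function: there exists Q ∈ ℂ[X] with f(z) = Q(z) for all z ∈ ℂ. -/
open Polynomial

set_option maxHeartbeats 1000000
open Polynomial Filter

lemma growth_poly (f : ℂ → ℂ) (hf : Differentiable ℂ f) (m : ℕ) (C R₀ : ℝ)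
    (h : ∀ z : ℂ, R₀ ≤ ‖z‖ → ‖f z‖ ≤ C * ‖z‖ ^ m) :
    ∃ Q : Polynomial ℂ, ∀ z, f z = Q.eval z := by
  obtain ⟨p, hps⟩ : ∃ p, HasFPowerSeriesOnBall f p 0 ⊤ :=
    ⟨_, hf.hasFPowerSeriesOnBall 0 (R := 1) one_pos⟩
  have hcoef : ∀ n, m < n → p n = 0 := by
    intro n hn
    have key : ∀ R : ℝ, max 1 R₀ ≤ R → ‖p n‖ ≤ C * R ^ m * R⁻¹ ^ n := by
      intro R hR
      have hR1 : (1:ℝ) ≤ R := le_trans (le_max_left _ _) hR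
      have hR0 : (0:ℝ) < R := lt_of_lt_of_le zero_lt_one hR1
      have hpR : HasFPowerSeriesOnBall f (cauchyPowerSeries f 0 R) 0 ⊤ := by
        have h' := hf.hasFPowerSeriesOnBall 0 (R := R.toNNReal) (by simp [hR0])
        rwa [Real.coe_toNNReal R hR0.le] at h'
      have hpp : p = cauchyPowerSeries f 0 R :=
        hps.hasFPowerSeriesAt.eq_formalMultilinearSeries hpR.hasFPowerSeriesAt
      rw [hpp]
      refine (norm_cauchyPowerSeries_le f 0 R n).trans ?_
      rw [abs_of_pos hR0]
      have hint : ∫ θ : ℝ in (0)..2 * Real.pi, ‖f (circleMap 0 R θ)‖ ≤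
          2 * Real.pi * (C * R ^ m) := by
        have hb : ∫ θ : ℝ in (0)..2 * Real.pi, ‖f (circleMap 0 R θ)‖ ≤
            ∫ _ : ℝ in (0)..2 * Real.pi, C * R ^ m := by
          apply intervalIntegral.integral_mono_on Real.two_pi_pos.le
          · exact ((hf.continuous.norm).comp (continuous_circleMap 0 R)).intervalIntegrable _ _
          · exact intervalIntegrable_const
          · intro θ _
            have hnorm : ‖circleMap 0 R θ‖ = R := by simp [abs_of_pos hR0]
            simpa [hnorm] using
              h (circleMap 0 R θ) (by rw [hnorm]; exact le_trans (le_max_right _ _) hR)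
        simpa using hb.trans_eq (by rw [intervalIntegral.integral_const]; rw [smul_eq_mul]; ring)
      have step : (2 * Real.pi)⁻¹ * ∫ θ : ℝ in (0)..2 * Real.pi, ‖f (circleMap 0 R θ)‖ ≤
          C * R ^ m := by
        calc (2 * Real.pi)⁻¹ * ∫ θ : ℝ in (0)..2 * Real.pi, ‖f (circleMap 0 R θ)‖
            ≤ (2 * Real.pi)⁻¹ * (2 * Real.pi * (C * R ^ m)) :=
              mul_le_mul_of_nonneg_left hint (by positivity)
          _ = C * R ^ m := by field_simp
      exact mul_le_mul_of_nonneg_right step (by positivity)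
    have htend : Tendsto (fun R : ℝ => C * R ^ m * R⁻¹ ^ n) atTop (nhds 0) := by
      have h1 : Tendsto (fun R : ℝ => C * R⁻¹ ^ (n - m)) atTop (nhds 0) := by
        have := (tendsto_inv_atTop_zero.pow (n - m)).const_mul C
        simpa [zero_pow (Nat.sub_ne_zero_of_lt hn)] using this
      refine h1.congr' ?_
      filter_upwards [eventually_gt_atTop 0] with R hR
      have hRne : R ≠ 0 := ne_of_gt hR
      have hsplit : R⁻¹ ^ n = R⁻¹ ^ (n - m) * R⁻¹ ^ m := by
        rw [← pow_add]; congr 1; omega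
      rw [hsplit]
      have : R ^ m * R⁻¹ ^ m = 1 := by
        rw [← mul_pow, mul_inv_cancel₀ hRne, one_pow]
      calc C * R⁻¹ ^ (n - m) = C * R⁻¹ ^ (n - m) * (R ^ m * R⁻¹ ^ m) := by rw [this, mul_one]
        _ = C * R ^ m * (R⁻¹ ^ (n - m) * R⁻¹ ^ m) := by ring
    have : ‖p n‖ ≤ 0 := by
      refine ge_of_tendsto htend ?_
      filter_upwards [eventually_ge_atTop (max 1 R₀)] with R hR using key R hR
    exact norm_le_zero_iff.mp this
  refine ⟨∑ k ∈ Finset.range (m + 1), Polynomial.C (p k (fun _ => 1)) * X ^ k, fun z => ?_⟩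
  have hsum := hps.sum (y := z) (by simp)
  have hzero : ∀ n ∉ Finset.range (m + 1), (p n fun _ => z) = 0 := by
    intro n hn
    rw [hcoef n (by simpa using hn)]
    simp
  have happ : ∀ n : ℕ, (p n fun _ => z) = z ^ n * (p n fun _ => 1) := by
    intro n
    have := (p n).map_smul_univ (fun _ => z) (fun _ => 1)
    simpa [smul_eq_mul] using this
  rw [zero_add] at hsum
  rw [hsum, FormalMultilinearSeries.sum, tsum_eq_sum hzero]
  simp only [happ, eval_finset_sum, eval_mul, eval_C, eval_pow, eval_X]
  exact Finset.sum_congr rfl fun k _ => mul_comm _ _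

open Polynomial

noncomputable def e2 : MvPolynomial (Fin 2) ℂ ≃ₐ[ℂ] Polynomial (Polynomial ℂ) :=
  (MvPolynomial.renameEquiv ℂ (Equiv.swap 0 1)).trans
    ((MvPolynomial.finSuccEquiv ℂ 1).trans
      (Polynomial.mapAlgEquiv ((MvPolynomial.finSuccEquiv ℂ 0).trans
        (Polynomial.mapAlgEquiv (MvPolynomial.isEmptyAlgEquiv ℂ (Fin 0))))))

lemma e2_C (c : ℂ) : e2 (MvPolynomial.C c) = Polynomial.C (Polynomial.C c) := by
  simp [e2, MvPolynomial.finSuccEquiv_apply]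
  exact MvPolynomial.coeff_zero_C c

lemma e2_X0 : e2 (MvPolynomial.X 0) = Polynomial.C Polynomial.X := by
  simp only [e2, AlgEquiv.trans_apply, MvPolynomial.renameEquiv_apply, MvPolynomial.rename_X,
    Equiv.swap_apply_left]
  rw [show (MvPolynomial.X (1 : Fin 2) : MvPolynomial (Fin 2) ℂ) = MvPolynomial.X (Fin.succ 0)
    from rfl, MvPolynomial.finSuccEquiv_X_succ]
  simp [MvPolynomial.finSuccEquiv_X_zero]

lemma e2_X1 : e2 (MvPolynomial.X 1) = Polynomial.X := by
  simp only [e2, AlgEquiv.trans_apply, MvPolynomial.renameEquiv_apply, MvPolynomial.rename_X,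
    Equiv.swap_apply_right, MvPolynomial.finSuccEquiv_X_zero]
  simp

lemma e2_eval (z w : ℂ) (P : MvPolynomial (Fin 2) ℂ) :
    ((e2 P).map (evalRingHom z)).eval w = MvPolynomial.eval ![z, w] P := by
  have : ((evalRingHom w).comp ((mapRingHom (evalRingHom z)).comp
      (e2 : MvPolynomial (Fin 2) ℂ →+* Polynomial (Polynomial ℂ)))) =
      (MvPolynomial.eval ![z, w]) := by
    apply MvPolynomial.ringHom_ext
    · intro c
      simp [e2_C]
    · intro i
      fin_cases i
      · simp [e2_X0]
      · simp [e2_X1]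
  exact DFunLike.congr_fun this P

open Polynomial

lemma poly_eval_bound (b : Polynomial ℂ) {D : ℕ} (hD : b.natDegree ≤ D) {z : ℂ}
    (hz : 1 ≤ ‖z‖) :
    ‖b.eval z‖ ≤ (∑ i ∈ Finset.range (b.natDegree + 1), ‖b.coeff i‖) * ‖z‖ ^ D := by
  rw [eval_eq_sum_range]
  refine (norm_sum_le _ _).trans ?_
  rw [Finset.sum_mul]
  apply Finset.sum_le_sum
  intro i hi
  rw [norm_mul, norm_pow]
  have hiD : i ≤ D := le_trans (Nat.lt_succ_iff.mp (Finset.mem_range.mp hi)) hD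
  exact mul_le_mul_of_nonneg_left (pow_le_pow_right₀ hz hiD) (norm_nonneg _)

lemma poly_lower_bound (a : Polynomial ℂ) (ha : a ≠ 0) :
    ∃ c > 0, ∃ R₁ : ℝ, ∀ z : ℂ, R₁ ≤ ‖z‖ → c ≤ ‖a.eval z‖ := by
  rcases le_or_gt a.degree 0 with hd | hd
  · obtain ⟨c₀, h₀⟩ : ∃ c₀, a = C c₀ := ⟨a.coeff 0, eq_C_of_degree_le_zero hd⟩
    have hc₀ : c₀ ≠ 0 := by rintro rfl; exact ha (by simp [h₀])
    exact ⟨‖c₀‖, norm_pos_iff.mpr hc₀, 0, fun z _ => by simp [h₀]⟩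
  · have ht : Filter.Tendsto (fun z : ℂ => ‖a.eval z‖)
        (Filter.comap (‖·‖) Filter.atTop) Filter.atTop :=
      Polynomial.tendsto_norm_atTop a hd Filter.tendsto_comap
    have hev := ht.eventually (Filter.eventually_ge_atTop 1)
    rw [Filter.eventually_comap] at hev
    obtain ⟨R₁, hR₁⟩ := Filter.eventually_atTop.mp hev
    exact ⟨1, one_pos, R₁, fun z hz => hR₁ ‖z‖ hz z rfl⟩

/-- **Entire complex Nash functions are polynomials.** -/
theorem stmt_5 (f : ℂ → ℂ) (hf : Differentiable ℂ f)
    (P : MvPolynomial (Fin 2) ℂ) (hP : P ≠ 0)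
    (hPf : ∀ z : ℂ, MvPolynomial.eval ![z, f z] P = 0) :
    ∃ Q : Polynomial ℂ, ∀ z : ℂ, f z = Q.eval z := by
  obtain ⟨q, hqdef⟩ : ∃ q, q = e2 P := ⟨_, rfl⟩
  have hq : q ≠ 0 := fun h => hP (e2.injective (by rw [← hqdef, h, map_zero]))
  have key : ∀ z : ℂ, ((q.map (evalRingHom z)).eval (f z)) = 0 := fun z => by
    rw [hqdef, e2_eval]; exact hPf z
  set n := q.natDegree with hn
  by_cases hn0 : n = 0
  · exfalso
    have hqC : q = C (q.coeff 0) := eq_C_of_natDegree_eq_zero hn0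
    have : q.coeff 0 = 0 := by
      apply Polynomial.funext (q := 0)
      intro z
      have := key z
      rw [hqC] at this
      simpa using this
    exact hq (by rw [hqC, this, map_zero])
  set a := q.leadingCoeff with ha
  have ha0 : a ≠ 0 := leadingCoeff_ne_zero.mpr hq
  obtain ⟨c, hc, R₁, hlow⟩ := poly_lower_bound a ha0
  set D := Finset.sup (Finset.range n) (fun i => (q.coeff i).natDegree) with hD
  set S := ∑ i ∈ Finset.range n,
      ∑ j ∈ Finset.range ((q.coeff i).natDegree + 1), ‖(q.coeff i).coeff j‖ with hS
  have hS0 : 0 ≤ S := Finset.sum_nonneg fun i _ =>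
    Finset.sum_nonneg fun j _ => norm_nonneg _
  apply growth_poly f hf D (S / c + 1) (max 1 R₁)
  intro z hz
  have hz1 : 1 ≤ ‖z‖ := le_trans (le_max_left _ _) hz
  have hza : c ≤ ‖a.eval z‖ := hlow z (le_trans (le_max_right _ _) hz)
  have hane : (evalRingHom z) a ≠ 0 := by
    intro h0
    rw [show (evalRingHom z) a = a.eval z from rfl] at h0
    rw [h0, norm_zero] at hza
    exact absurd (lt_of_le_of_lt hza hc) (lt_irrefl _)
  set qz := q.map (evalRingHom z) with hqz
  have hdeg : qz.natDegree = n := natDegree_map_of_leadingCoeff_ne_zero _ hane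
  have hlead : qz.leadingCoeff = a.eval z := leadingCoeff_map_of_leadingCoeff_ne_zero _ hane
  have hqz0 : qz ≠ 0 := fun h => hane (by
    rw [show (evalRingHom z) a = qz.leadingCoeff from hlead.symm, h, leadingCoeff_zero])
  have hroot : qz.IsRoot (f z) := key z
  have hb : ‖f z‖₊ < cauchyBound qz := hroot.norm_lt_cauchyBound hqz0
  -- convert to a real bound
  have hsup : (Finset.sup (Finset.range n) (fun i => ‖qz.coeff i‖₊) : NNReal) ≤
      ∑ i ∈ Finset.range n, ‖qz.coeff i‖₊ :=
    Finset.sup_le fun i hi => Finset.single_le_sum (f := fun i => ‖qz.coeff i‖₊) (fun _ _ => zero_le) hi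
  have hstep1 : ‖f z‖ ≤ (∑ i ∈ Finset.range n, ‖(q.coeff i).eval z‖) / ‖a.eval z‖ + 1 := by
    have h1 : ‖f z‖ ≤ (cauchyBound qz : ℝ) := le_of_lt hb
    refine h1.trans ?_
    rw [cauchyBound, hdeg, hlead]
    push_cast
    have h2 : ((Finset.sup (Finset.range n) (fun i => ‖qz.coeff i‖₊) : NNReal) : ℝ) ≤
        ∑ i ∈ Finset.range n, ‖(q.coeff i).eval z‖ := by
      refine le_trans (NNReal.coe_le_coe.mpr hsup) ?_
      rw [NNReal.coe_sum]
      apply le_of_eq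
      refine Finset.sum_congr rfl fun i _ => ?_
      rw [coe_nnnorm, hqz, coeff_map]
      rfl
    have h3 : (0:ℝ) < ‖a.eval z‖ := lt_of_lt_of_le hc hza
    exact add_le_add_left ((div_le_div_iff_of_pos_right h3).mpr h2) 1
  have hstep2 : (∑ i ∈ Finset.range n, ‖(q.coeff i).eval z‖) ≤ S * ‖z‖ ^ D := by
    rw [hS, Finset.sum_mul]
    apply Finset.sum_le_sum
    intro i hi
    exact poly_eval_bound (q.coeff i) (Finset.le_sup (f := fun i => (q.coeff i).natDegree) hi) hz1
  have h5 : (∑ i ∈ Finset.range n, ‖(q.coeff i).eval z‖) / ‖a.eval z‖ ≤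
      (S * ‖z‖ ^ D) / c :=
    div_le_div₀ (le_trans (Finset.sum_nonneg fun i _ => norm_nonneg _) hstep2) hstep2 hc hza
  have h6 : (1:ℝ) ≤ ‖z‖ ^ D := one_le_pow₀ hz1
  have h7 : ‖f z‖ ≤ (S * ‖z‖ ^ D) / c + 1 := hstep1.trans (add_le_add_left h5 1)
  refine h7.trans ?_
  have h8 : (S * ‖z‖ ^ D) / c = (S / c) * ‖z‖ ^ D := by ring
  have h9 : (0:ℝ) ≤ S / c := div_nonneg hS0 hc.le
  rw [h8]
  nlinarith [h6, h9]
end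

section
/- Let D ⊆ ℂ be an unbounded open connected set and f : D → ℂ a holomorphic function satisfying P(z, f(z)) = 0 on D for some nonzero polynomial P ∈ ℂ[X,Y]. Then there exist an integer m ≥ 0 and constants C, R ≥ 1 such that |f(z)| ≤ C(1 + |z|^m) for all z ∈ D with |z| ≥ R. -/
/-!
Write `P(z, w) = ∑ⱼ qⱼ(z) wʲ` with `q_n ≠ 0` the leading coefficient in `w`. For large `|z|`,
`|q_n(z)|` is bounded below by a positive constant, while every `|qⱼ(z)|` is `O(|z|^m)`. Cauchy's
bound on the roots of `w ↦ P(z, w)` then gives `|f(z)| ≤ max 1 (∑_{j<n} |qⱼ(z)| / |q_n(z)|)`,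
which is `O(1 + |z|^m)`.
-/

open Polynomial Polynomial.Bivariate Filter Finset

variable {𝕜 : Type*} [NormedField 𝕜]

namespace Polynomial

theorem norm_coeff_mul_norm_le_of_eval_eq_zero {p : 𝕜[X]} {n : ℕ} (hn : p.natDegree ≤ n)
    {w : 𝕜} (hw : 1 ≤ ‖w‖) (hroot : p.eval w = 0) :
    ‖p.coeff n‖ * ‖w‖ ≤ ∑ j ∈ range n, ‖p.coeff j‖ := by
  rw [eval_eq_sum_range' (Nat.lt_succ_of_le hn), sum_range_succ] at hroot
  cases n with
  | zero => simp_all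
  | succ k =>
    have hlead : ‖p.coeff (k + 1)‖ * ‖w‖ ^ (k + 1) ≤ (∑ j ∈ range (k + 1), ‖p.coeff j‖) * ‖w‖ ^ k :=
      calc ‖p.coeff (k + 1)‖ * ‖w‖ ^ (k + 1)
          = ‖∑ j ∈ range (k + 1), p.coeff j * w ^ j‖ := by
            rw [← norm_pow, ← norm_mul, eq_neg_of_add_eq_zero_right hroot, norm_neg]
        _ ≤ ∑ j ∈ range (k + 1), ‖p.coeff j‖ * ‖w‖ ^ k := by
            refine (norm_sum_le _ _).trans (sum_le_sum fun j hj => ?_)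
            rw [norm_mul, norm_pow]
            gcongr
            exact Nat.lt_succ_iff.mp (mem_range.mp hj)
        _ = _ := by rw [sum_mul]
    rw [pow_succ', ← mul_assoc] at hlead
    exact le_of_mul_le_mul_right hlead (pow_pos (one_pos.trans_le hw) k)

theorem norm_eval_le_sum_norm_coeff_mul_pow {p : 𝕜[X]} {m : ℕ} (hm : p.natDegree ≤ m) {z : 𝕜}
    (hz : 1 ≤ ‖z‖) : ‖p.eval z‖ ≤ (∑ i ∈ range (m + 1), ‖p.coeff i‖) * ‖z‖ ^ m := by
  rw [eval_eq_sum_range' (Nat.lt_succ_of_le hm), sum_mul]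
  refine (norm_sum_le _ _).trans (sum_le_sum fun i hi => ?_)
  rw [norm_mul, norm_pow]
  gcongr
  exact Nat.lt_succ_iff.mp (mem_range.mp hi)

theorem exists_sum_norm_eval_le_mul_pow {ι : Type*} (s : Finset ι) (p : ι → 𝕜[X]) :
    ∃ (K : ℝ) (m : ℕ), ∀ z : 𝕜, 1 ≤ ‖z‖ → ∑ i ∈ s, ‖(p i).eval z‖ ≤ K * ‖z‖ ^ m := by
  set m := s.sup fun i => (p i).natDegree
  refine ⟨∑ i ∈ s, ∑ k ∈ range (m + 1), ‖(p i).coeff k‖, m, fun z hz => ?_⟩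
  rw [sum_mul]
  exact sum_le_sum fun i hi => norm_eval_le_sum_norm_coeff_mul_pow
    (le_sup (f := fun i => (p i).natDegree) hi) hz

theorem exists_pos_le_norm_eval {p : 𝕜[X]} (hp : p ≠ 0) :
    ∃ c > (0 : ℝ), ∃ R : ℝ, ∀ z : 𝕜, R ≤ ‖z‖ → c ≤ ‖p.eval z‖ := by
  rcases le_or_gt p.degree 0 with hdeg | hdeg
  · rw [eq_C_of_degree_le_zero hdeg] at hp ⊢
    exact ⟨_, norm_pos_iff.mpr (C_ne_zero.mp hp), 0, fun z _ => by rw [eval_C]⟩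
  · obtain ⟨R, hR⟩ := eventually_atTop.mp <| eventually_comap.mp <|
      (p.tendsto_norm_atTop hdeg tendsto_comap).eventually_ge_atTop 1
    exact ⟨1, one_pos, R, fun z hz => hR ‖z‖ hz z rfl⟩

end Polynomial

theorem MvPolynomial.eval_equivMvPolynomial (Q : 𝕜[X][Y]) (z w : 𝕜) :
    MvPolynomial.eval ![z, w] (equivMvPolynomial 𝕜 Q) = Q.evalEval z w := by
  induction Q using Polynomial.induction_on' with
  | add p q hp hq => simp [hp, hq]
  | monomial n a =>
    induction a using Polynomial.induction_on' with
    | add p q hp hq => simp_all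
    | monomial k b => simp [equivMvPolynomial, evalEval]

theorem Polynomial.exists_norm_le_of_evalEval_eq_zero {Q : 𝕜[X][Y]} (hQ : Q ≠ 0) :
    ∃ (m : ℕ) (C R : ℝ), 1 ≤ C ∧ 1 ≤ R ∧
      ∀ z w : 𝕜, R ≤ ‖z‖ → Q.evalEval z w = 0 → ‖w‖ ≤ C * (1 + ‖z‖ ^ m) := by
  set n := Q.natDegree
  obtain ⟨c, hc, R, hlead⟩ := exists_pos_le_norm_eval (leadingCoeff_ne_zero.mpr hQ)
  obtain ⟨K, m, hK⟩ := exists_sum_norm_eval_le_mul_pow (range n) Q.coeff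
  refine ⟨m, max 1 (K / c), max 1 R, le_max_left _ _, le_max_left _ _, fun z w hz hroot => ?_⟩
  have hz1 : 1 ≤ ‖z‖ := (le_max_left _ _).trans hz
  have hzm : 0 ≤ ‖z‖ ^ m := by positivity
  rcases le_total ‖w‖ 1 with hw | hw
  · nlinarith [le_max_left 1 (K / c)]
  have hcauchy : c * ‖w‖ ≤ K * ‖z‖ ^ m := calc
    c * ‖w‖ ≤ ‖(Q.coeff n).eval z‖ * ‖w‖ := by gcongr; exact hlead z ((le_max_right _ _).trans hz)
    _ ≤ ∑ j ∈ range n, ‖(Q.coeff j).eval z‖ := by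
      simpa only [coeff_map, coe_evalRingHom] using
        norm_coeff_mul_norm_le_of_eval_eq_zero (p := Q.map (evalRingHom z)) natDegree_map_le hw
          (by rwa [← eval₂_evalRingHom, ← eval_map] at hroot)
    _ ≤ K * ‖z‖ ^ m := hK z hz1
  calc ‖w‖ ≤ K / c * ‖z‖ ^ m := by rw [div_mul_eq_mul_div, le_div_iff₀ hc]; linarith
    _ ≤ max 1 (K / c) * (1 + ‖z‖ ^ m) := by nlinarith [le_max_right 1 (K / c), le_max_left 1 (K / c)]

theorem stmt_7_general (D : Set ℂ)
    (f : ℂ → ℂ)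
    (P : MvPolynomial (Fin 2) ℂ) (hP : P ≠ 0)
    (hPf : ∀ z ∈ D, MvPolynomial.eval ![z, f z] P = 0) :
    ∃ (m : ℕ) (C R : ℝ), 1 ≤ C ∧ 1 ≤ R ∧
      ∀ z ∈ D, R ≤ ‖z‖ →
        ‖f z‖ ≤ C * (1 + ‖z‖ ^ m) := by
  obtain ⟨Q, rfl⟩ := (equivMvPolynomial ℂ).surjective P
  obtain ⟨m, C, R, hC, hR, hbound⟩ :=
    exists_norm_le_of_evalEval_eq_zero (by simpa using hP : Q ≠ 0)
  refine ⟨m, C, R, hC, hR, fun z hz hzR => hbound z (f z) hzR ?_⟩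
  rw [← MvPolynomial.eval_equivMvPolynomial]
  exact hPf z hz

/-- **Polynomial bounds for complex Nash functions.** If `D ⊆ ℂ` is an unbounded open
connected set and `f` is holomorphic on `D` satisfying a nonzero polynomial identity
`P(z, f z) = 0` on `D`, then there are `m : ℕ` and constants `C, R ≥ 1` with
`|f z| ≤ C (1 + |z|^m)` for all `z ∈ D` with `|z| ≥ R`. -/
theorem stmt_7 (D : Set ℂ) (hopen : IsOpen D) (hconn : IsConnected D)
    (hunb : ¬ Bornology.IsBounded D)
    (f : ℂ → ℂ) (hf : DifferentiableOn ℂ f D)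
    (P : MvPolynomial (Fin 2) ℂ) (hP : P ≠ 0)
    (hPf : ∀ z ∈ D, MvPolynomial.eval ![z, f z] P = 0) :
    ∃ (m : ℕ) (C R : ℝ), 1 ≤ C ∧ 1 ≤ R ∧
      ∀ z ∈ D, R ≤ ‖z‖ →
        ‖f z‖ ≤ C * (1 + ‖z‖ ^ m) :=
  stmt_7_general D f P hP hPf
end

section
/- Let γ > 0 be an irrational real number and let f(z) := exp(γ · Log z) be the principal branch of z^γ on D := ℂ \ {z ∈ ℝ : z ≤ 0}. If P ∈ ℂ[X,Y] satisfies P(z, f(z)) = 0 for all z ∈ D, then P is the zero polynomial; in particular f is not a complex Nash function on D. -/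
/-!
At the points `z = e^m`, `m ∈ ℕ`, of the positive real axis we have `z^γ = e^{γ m}`, so
`P(z, z^γ) = ∑_d c_d w_d^m` with `w_d = e^{d₀ + d₁ γ}`. Irrationality of `γ` makes the `w_d`
pairwise distinct, and a Vandermonde determinant then forces every coefficient `c_d` to vanish.
-/

open Finset

theorem Finset.eq_zero_of_forall_sum_mul_pow_eq_zero {R ι : Type*} [CommRing R] [IsDomain R]
    {s : Finset ι} {f v : ι → R} (hf : Set.InjOn f s)
    (hfv : ∀ m : ℕ, ∑ i ∈ s, v i * f i ^ m = 0) : ∀ i ∈ s, v i = 0 := by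
  intro i hi
  let e := s.equivFin
  have hinj : Function.Injective fun k => f (e.symm k) := fun k l hkl =>
    e.symm.injective <| Subtype.ext <| hf (e.symm k).2 (e.symm l).2 hkl
  have hzero := Matrix.eq_zero_of_forall_pow_sum_mul_pow_eq_zero (v := fun k => v (e.symm k)) hinj
    fun m => by
      rw [e.symm.sum_comp fun j : s => v j * f j ^ (m : ℕ)]
      exact (s.sum_coe_sort _).trans (hfv m)
  simpa using congrFun hzero (e ⟨i, hi⟩)

theorem Irrational.eq_and_eq_of_add_mul_eq {γ : ℝ} (hγ : Irrational γ) {a b c d : ℚ}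
    (h : a + b * γ = c + d * γ) : a = c ∧ b = d := by
  have hbd : b = d := by
    by_contra hne
    have hq : b - d ≠ 0 := sub_ne_zero.2 hne
    refine (hγ.mul_ratCast hq) ⟨c - a, ?_⟩
    push_cast
    linarith
  refine ⟨?_, hbd⟩
  subst hbd
  exact_mod_cast add_right_cancel h

theorem MvPolynomial.eval_exp_mul_eq_sum_pow {σ : Type*} [Fintype σ] (P : MvPolynomial σ ℂ)
    (a : σ → ℂ) (m : ℕ) :
    eval (fun i => Complex.exp (m * a i)) P =
      ∑ d ∈ P.support, coeff d P * Complex.exp (∑ i, d i * a i) ^ m := by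
  rw [eval_eq']
  refine sum_congr rfl fun d _ => ?_
  simp only [← Complex.exp_nat_mul, ← Complex.exp_sum]
  congr 2
  rw [mul_sum]
  exact sum_congr rfl fun i _ => by ring

theorem Irrational.injective_cexp_sum_mul_cons_one {γ : ℝ} (hγ : Irrational γ) :
    Function.Injective fun d : Fin 2 →₀ ℕ => Complex.exp (∑ i, d i * ![1, (γ : ℂ)] i) := by
  intro d e hde
  have hreal : (d 0 : ℝ) + d 1 * γ = e 0 + e 1 * γ := by
    apply Real.exp_injective
    apply Complex.ofReal_injective
    push_cast
    simpa using hde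
  obtain ⟨h0, h1⟩ := hγ.eq_and_eq_of_add_mul_eq (a := d 0) (b := d 1) (c := e 0) (d := e 1)
    (by exact_mod_cast hreal)
  ext i
  fin_cases i
  · exact_mod_cast h0
  · exact_mod_cast h1

theorem stmt_9_general (γ : ℝ) (hγ : Irrational γ)
    (P : MvPolynomial (Fin 2) ℂ)
    (hPf : ∀ z : ℂ, ¬ (z.im = 0 ∧ z.re ≤ 0) →
      MvPolynomial.eval ![z, Complex.exp ((γ : ℂ) * Complex.log z)] P = 0) :
    P = 0 := by
  have hsum (m : ℕ) : ∑ d ∈ P.support,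
      P.coeff d * Complex.exp (∑ i, d i * ![1, (γ : ℂ)] i) ^ m = 0 := by
    have hlog : Complex.log (Complex.exp m) = m :=
      Complex.log_exp (by simp [Real.pi_pos]) (by simp [Real.pi_pos.le])
    have hpoint : ![Complex.exp m, Complex.exp (γ * Complex.log (Complex.exp m))] =
        fun i => Complex.exp (m * ![1, (γ : ℂ)] i) := by
      ext i; fin_cases i <;> simp [hlog, mul_comm]
    have hslit : ¬ ((Complex.exp m).im = 0 ∧ (Complex.exp m).re ≤ 0) := by
      simp [Complex.exp_re, Real.exp_pos]
    rw [← MvPolynomial.eval_exp_mul_eq_sum_pow, ← hpoint]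
    exact hPf _ hslit
  ext d
  by_cases hd : d ∈ P.support
  · exact eq_zero_of_forall_sum_mul_pow_eq_zero hγ.injective_cexp_sum_mul_cons_one.injOn hsum d hd
  · exact MvPolynomial.notMem_support_iff.mp hd

/-- An irrational positive real power `z^γ := exp (γ ⬝ Log z)` (principal branch) on the slit
plane `D = ℂ \ {z ∈ ℝ : z ≤ 0}` satisfies no nontrivial polynomial identity: if
`P ∈ ℂ[X,Y]` vanishes at `(z, z^γ)` for all `z ∈ D`, then `P = 0`.  In particular `z^γ`
is not a complex Nash function on `D`. -/
theorem stmt_9 (γ : ℝ) (hγ : Irrational γ) (hpos : 0 < γ)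
    (P : MvPolynomial (Fin 2) ℂ)
    (hPf : ∀ z : ℂ, ¬ (z.im = 0 ∧ z.re ≤ 0) →
      MvPolynomial.eval ![z, Complex.exp ((γ : ℂ) * Complex.log z)] P = 0) :
    P = 0 :=
  stmt_9_general γ hγ P hPf
end
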